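/- arXiv:1809.04761 — 2 statements merged into one kernel-verified Lean document; each statement's English description precedes it below -/
import Mathlib

section
/- Let f : Γ → Γ be an immersion of a finite connected core graph with no nontrivial f-invariant forest and no invariant loop of degree 1 (i.e., no k ≥ 1 and nontrivial loop σ with f^k(σ) freely homotopic to σ). Then there exists n ≥ 1 such that the combinatorial length of f^n(e) is at least 2 for every edge e of Γ. -/
/-- A finite combinatorial (Serre) graph: a finite set of vertices and a finite set of
oriented edges with a fixed-point-free involution `bar` (orientation reversal) and an
initial-vertex map `ι`. -/
structure CGraph where
  V : Type
  E : Type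
  [fV : Fintype V]
  [fE : Fintype E]
  [dV : DecidableEq V]
  [dE : DecidableEq E]
  ι : E → V
  bar : E → E
  bar_bar : ∀ e, bar (bar e) = e
  bar_ne : ∀ e, bar e ≠ e

attribute [instance] CGraph.fV CGraph.fE CGraph.dV CGraph.dE

namespace CGraph

variable (G : CGraph)

/-- Terminal vertex of an edge. -/
def τ (e : G.E) : G.V := G.ι (G.bar e)

/-- A list of edges is an edge path if consecutive edges are composable. -/
def IsPath (l : List G.E) : Prop := l.Chain' fun e e' => G.τ e = G.ι e'

/-- A path is reduced (immersed) if it has no backtracking. -/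
def IsReduced (l : List G.E) : Prop :=
  IsPath G l ∧ l.Chain' fun e e' => e' ≠ G.bar e

/-- The path `l` starts at the vertex `v`. -/
def StartsAt (l : List G.E) (v : G.V) : Prop := ∀ e ∈ l.head?, G.ι e = v

/-- The path `l` ends at the vertex `v`. -/
def EndsAt (l : List G.E) (v : G.V) : Prop := ∀ e ∈ l.getLast?, G.τ e = v

/-- A nontrivial closed edge path based at `v`. -/
def IsBasedLoopAt (l : List G.E) (v : G.V) : Prop :=
  l ≠ [] ∧ IsPath G l ∧ StartsAt G l v ∧ EndsAt G l v

/-- A nontrivial closed edge path (at some vertex). -/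
def IsCircuit (l : List G.E) : Prop :=
  l ≠ [] ∧ IsPath G l ∧ ∃ v, StartsAt G l v ∧ EndsAt G l v

/-- A circuit is cyclically reduced if it is reduced and there is no backtracking
around the basepoint. -/
def IsCyclicallyReduced (l : List G.E) : Prop :=
  IsReduced G l ∧ ∀ a ∈ l.head?, ∀ b ∈ l.getLast?, a ≠ G.bar b

/-- Elementary reduction of an edge path: deleting a backtracking pair. -/
def ReduceStep (l l' : List G.E) : Prop :=
  ∃ (l₁ l₂ : List G.E) (e : G.E), l = l₁ ++ e :: G.bar e :: l₂ ∧ l' = l₁ ++ l₂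

/-- The combinatorial length of a path after tightening (free reduction)
rel its endpoints. -/
noncomputable def redLen (l : List G.E) : ℕ :=
  sInf {n | ∃ l', Relation.ReflTransGen (ReduceStep G) l l' ∧
    (¬ ∃ l'', ReduceStep G l' l'') ∧ l'.length = n}

/-- One step of free homotopy of loops: an elementary reduction, its inverse,
or a cyclic rotation. -/
def FreeStep (l l' : List G.E) : Prop :=
  ReduceStep G l l' ∨ ReduceStep G l' l ∨ ∃ n, l' = l.rotate n

/-- Two closed edge paths are freely homotopic. -/
def FreelyHomotopic (l l' : List G.E) : Prop :=
  Relation.ReflTransGen (FreeStep G) l l'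

/-- The `d`-th power (concatenation) of a closed path. -/
def pow (l : List G.E) (d : ℕ) : List G.E := (List.replicate d l).flatten

/-- The valence of a vertex: the number of oriented edges emanating from it. -/
def valence (v : G.V) : ℕ := Fintype.card {e : G.E // G.ι e = v}

/-- The graph is connected. -/
def Conn : Prop :=
  ∀ u v : G.V, u = v ∨ ∃ l, l ≠ [] ∧ IsPath G l ∧ StartsAt G l u ∧ EndsAt G l v

/-- A (topological) graph map `Γ → Γ`: vertices to vertices, each edge to a nontrivial
edge path, compatibly with endpoints and orientation reversal. -/
structure GMap (G : CGraph) where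
  vmap : G.V → G.V
  emap : G.E → List G.E
  emap_ne : ∀ e, emap e ≠ []
  emap_path : ∀ e, IsPath G (emap e)
  emap_start : ∀ e, StartsAt G (emap e) (vmap (G.ι e))
  emap_bar : ∀ e, emap (G.bar e) = ((emap e).map G.bar).reverse

/-- The induced map of a graph map on edge paths. -/
def onPaths (F : GMap G) (l : List G.E) : List G.E := l.flatMap F.emap

/-- The `n`-th iterate `f^n` applied to an edge path. -/
def iterMap (F : GMap G) (n : ℕ) (l : List G.E) : List G.E := (onPaths G F)^[n] l

/-- A graph map is an immersion: it is locally injective, i.e. each edge maps to a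
reduced path and the derivative map on directions at each vertex is injective. -/
def IsImmersion (F : GMap G) : Prop :=
  (∀ e, IsReduced G (F.emap e)) ∧
  ∀ e₁ e₂ : G.E, G.ι e₁ = G.ι e₂ → (F.emap e₁).head? = (F.emap e₂).head? → e₁ = e₂

end CGraph

open CGraph


/-!
An immersion is injective on directions, so on edges that `f` maps to single edges it acts as
an edge map carrying cyclically reduced circuits to cyclically reduced circuits of the same
length. If some edge never expands, the edges whose iterates all have length one form an
`f`-invariant, orientation-closed set; by the forest hypothesis it carries a cyclically reduced
circuit, whose iterates, having bounded length, must eventually repeat, giving a periodic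
loop. Otherwise every edge expands at some time, and lengths only grow under iteration.
-/

theorem List.IsChain.and {α : Type*} {R S : α → α → Prop} {l : List α} (hR : l.IsChain R)
    (hS : l.IsChain S) : l.IsChain fun a b => R a b ∧ S a b := by
  induction l using List.twoStepInduction <;> grind

namespace CGraph

variable {G : CGraph} (F : GMap G)

section Iterates

theorem onPaths_singleton (e : G.E) : onPaths G F [e] = F.emap e := by
  simp [onPaths]

theorem onPaths_reverse_map_bar (l : List G.E) :
    onPaths G F (l.map G.bar).reverse = ((onPaths G F l).map G.bar).reverse := by
  induction l with
  | nil => rfl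
  | cons a t ih =>
    simp only [onPaths] at ih ⊢
    simp [List.flatMap_append, ih, F.emap_bar]

theorem iterMap_succ (n : ℕ) (l : List G.E) :
    iterMap G F (n + 1) l = onPaths G F (iterMap G F n l) :=
  Function.iterate_succ_apply' _ _ _

theorem iterMap_add (m n : ℕ) (l : List G.E) :
    iterMap G F (m + n) l = iterMap G F m (iterMap G F n l) :=
  Function.iterate_add_apply _ _ _ _

theorem iterMap_reverse_map_bar (n : ℕ) (l : List G.E) :
    iterMap G F n (l.map G.bar).reverse = ((iterMap G F n l).map G.bar).reverse := by
  induction n with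
  | zero => rfl
  | succ n ih => rw [iterMap_succ, iterMap_succ, ih, onPaths_reverse_map_bar]

theorem length_le_length_onPaths (l : List G.E) : l.length ≤ (onPaths G F l).length := by
  induction l with
  | nil => simp [onPaths]
  | cons a t ih =>
    have := List.length_pos_iff.mpr (F.emap_ne a)
    simp only [onPaths, List.flatMap_cons, List.length_append, List.length_cons] at ih ⊢
    omega

theorem monotone_length_iterMap (l : List G.E) : Monotone fun n => (iterMap G F n l).length :=
  monotone_nat_of_le_succ fun n => by
    simpa only [iterMap_succ] using length_le_length_onPaths F (iterMap G F n l)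

theorem one_le_length_iterMap_singleton (n : ℕ) (e : G.E) : 1 ≤ (iterMap G F n [e]).length :=
  monotone_length_iterMap F [e] n.zero_le

theorem exists_iterate_expanding_of_forall_exists
    (h : ∀ e : G.E, ∃ n, 2 ≤ (iterMap G F n [e]).length) :
    ∃ n ≥ 1, ∀ e : G.E, 2 ≤ (iterMap G F n [e]).length := by
  choose m hm using h
  refine ⟨Finset.univ.sup m + 1, by omega, fun e => (hm e).trans ?_⟩
  exact monotone_length_iterMap F [e] ((Finset.le_sup (Finset.mem_univ e)).trans (by omega))

end Iterates

section SingleEdgeImages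

variable {F} {a e : G.E}

theorem ι_eq_vmap_of_emap_eq_singleton (h : F.emap e = [a]) : G.ι a = F.vmap (G.ι e) :=
  F.emap_start e a (by simp [h])

theorem emap_bar_of_emap_eq_singleton (h : F.emap e = [a]) : F.emap (G.bar e) = [G.bar a] := by
  simp [F.emap_bar, h]

theorem τ_eq_vmap_of_emap_eq_singleton (h : F.emap e = [a]) : G.τ a = F.vmap (G.τ e) :=
  ι_eq_vmap_of_emap_eq_singleton (emap_bar_of_emap_eq_singleton h)

/-- Local injectivity at `τ a = ι b`: the path `a b` cannot be folded by `f` onto a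
backtracking pair. -/
theorem eq_bar_of_emap_eq_singleton (hF : IsImmersion G F) {b x : G.E}
    (ha : F.emap a = [x]) (hb : F.emap b = [G.bar x]) (hab : G.τ a = G.ι b) : b = G.bar a :=
  hF.2 b (G.bar a) hab.symm (by simp [hb, emap_bar_of_emap_eq_singleton ha])

end SingleEdgeImages

/-- The first edge of `f(e)`; it is all of `f(e)` when `e` does not expand. -/
def GMap.firstEdge (e : G.E) : G.E := (F.emap e).head (F.emap_ne e)

section EdgeMap

variable {F} {l : List G.E} (hl : ∀ e ∈ l, F.emap e = [F.firstEdge e])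
include hl

theorem onPaths_eq_map_firstEdge : onPaths G F l = l.map F.firstEdge := by
  induction l with
  | nil => rfl
  | cons a t ih =>
    simp only [onPaths, List.flatMap_cons, List.map_cons] at ih ⊢
    rw [hl a (by simp), ih fun e he => hl e (by simp [he]), List.singleton_append]

theorem length_onPaths_of_forall_emap_eq_singleton : (onPaths G F l).length = l.length := by
  rw [onPaths_eq_map_firstEdge hl, List.length_map]

theorem IsCircuit.onPaths (hc : IsCircuit G l) : IsCircuit G (onPaths G F l) := by
  obtain ⟨hne, hpath, v, hstart, hend⟩ := hc
  rw [onPaths_eq_map_firstEdge hl]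
  refine ⟨by simpa using hne, ?_, F.vmap v, ?_, ?_⟩
  · refine (List.isChain_map _).2 (hpath.imp_of_mem_imp fun a b ha hb hab => ?_)
    rw [τ_eq_vmap_of_emap_eq_singleton (hl a ha), ι_eq_vmap_of_emap_eq_singleton (hl b hb), hab]
  · simp only [StartsAt, List.head?_map, Option.mem_map]
    rintro _ ⟨a, ha, rfl⟩
    rw [ι_eq_vmap_of_emap_eq_singleton (hl a (List.mem_of_mem_head? ha)), hstart a ha]
  · simp only [EndsAt, List.getLast?_map, Option.mem_map]
    rintro _ ⟨b, hb, rfl⟩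
    rw [τ_eq_vmap_of_emap_eq_singleton (hl b (List.mem_of_mem_getLast? hb)), hend b hb]

theorem IsCyclicallyReduced.onPaths (hF : IsImmersion G F) (hc : IsCircuit G l)
    (hr : IsCyclicallyReduced G l) : IsCyclicallyReduced G (onPaths G F l) := by
  have hpath' := (hc.onPaths hl).2.1
  obtain ⟨-, -, v, hstart, hend⟩ := hc
  obtain ⟨⟨hpath, hnb⟩, hbdy⟩ := hr
  rw [onPaths_eq_map_firstEdge hl] at hpath' ⊢
  refine ⟨⟨hpath', (List.isChain_map _).2
    ((hpath.and hnb).imp_of_mem_imp fun a b ha hb hab heq => ?_)⟩, ?_⟩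
  · exact hab.2 (eq_bar_of_emap_eq_singleton hF (hl a ha) (heq ▸ hl b hb) hab.1)
  · simp only [List.head?_map, List.getLast?_map, Option.mem_map]
    rintro _ ⟨a, ha, rfl⟩ _ ⟨b, hb, rfl⟩ heq
    exact hbdy a ha b hb (eq_bar_of_emap_eq_singleton hF (hl b (List.mem_of_mem_getLast? hb))
      (heq ▸ hl a (List.mem_of_mem_head? ha)) ((hend b hb).trans (hstart a ha).symm))

end EdgeMap

def nonexpandingEdges : Set G.E := {e | ∀ n, (iterMap G F n [e]).length = 1}

section Nonexpanding

variable {F} {e : G.E} (he : e ∈ nonexpandingEdges F)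
include he

theorem emap_eq_singleton_firstEdge : F.emap e = [F.firstEdge e] := by
  obtain ⟨a, ha⟩ := List.length_eq_one_iff.mp (he 1)
  rw [show iterMap G F 1 [e] = F.emap e from onPaths_singleton F e] at ha
  simp [GMap.firstEdge, ha]

theorem firstEdge_mem_nonexpandingEdges : F.firstEdge e ∈ nonexpandingEdges F := fun n => by
  have := he (n + 1)
  rwa [iterMap_add, show iterMap G F 1 [e] = [F.firstEdge e] from
    (onPaths_singleton F e).trans (emap_eq_singleton_firstEdge he)] at this

theorem bar_mem_nonexpandingEdges : G.bar e ∈ nonexpandingEdges F := fun n => by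
  have := congrArg List.length (iterMap_reverse_map_bar F n [e])
  simp only [List.map_cons, List.map_nil, List.reverse_singleton, List.length_reverse,
    List.length_map] at this
  rw [this, he n]

end Nonexpanding

section Circuits

variable {F} {l : List G.E} (hl : ∀ e ∈ l, e ∈ nonexpandingEdges F)
include hl

theorem forall_mem_iterMap_nonexpandingEdges (n : ℕ) :
    ∀ e ∈ iterMap G F n l, e ∈ nonexpandingEdges F := by
  induction n with
  | zero => exact hl
  | succ n ih =>
    rw [iterMap_succ, onPaths_eq_map_firstEdge fun e he => emap_eq_singleton_firstEdge (ih e he)]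
    simpa using fun e he => firstEdge_mem_nonexpandingEdges (ih e he)

theorem length_iterMap_of_forall_mem_nonexpandingEdges (n : ℕ) :
    (iterMap G F n l).length = l.length := by
  induction n with
  | zero => rfl
  | succ n ih =>
    rw [iterMap_succ, length_onPaths_of_forall_emap_eq_singleton fun e he =>
      emap_eq_singleton_firstEdge (forall_mem_iterMap_nonexpandingEdges hl n e he), ih]

theorem isCircuit_isCyclicallyReduced_iterMap (hF : IsImmersion G F) (hc : IsCircuit G l)
    (hr : IsCyclicallyReduced G l) (n : ℕ) :
    IsCircuit G (iterMap G F n l) ∧ IsCyclicallyReduced G (iterMap G F n l) := by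
  induction n with
  | zero => exact ⟨hc, hr⟩
  | succ n ih =>
    have hsing := fun e he =>
      emap_eq_singleton_firstEdge (forall_mem_iterMap_nonexpandingEdges hl n e he)
    rw [iterMap_succ]
    exact ⟨ih.1.onPaths hsing, ih.2.onPaths hsing hF ih.1⟩

theorem exists_lt_iterMap_eq : ∃ i j, i < j ∧ iterMap G F i l = iterMap G F j l :=
  (List.finite_length_eq G.E l.length).exists_lt_map_eq_of_forall_mem
    (length_iterMap_of_forall_mem_nonexpandingEdges hl)

end Circuits

end CGraph

theorem exists_iterate_expanding_general (G : CGraph) (F : GMap G) (hF : IsImmersion G F)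
    (hforest : ¬ ∃ S : Set G.E, S.Nonempty ∧ (∀ e ∈ S, G.bar e ∈ S) ∧
      (∀ e ∈ S, ∀ e' ∈ F.emap e, e' ∈ S) ∧
      ¬ ∃ l : List G.E, l ≠ [] ∧ (∀ e ∈ l, e ∈ S) ∧ IsCircuit G l ∧ IsCyclicallyReduced G l)
    (hatoroidal : ¬ ∃ k ≥ 1, ∃ σ : List G.E, IsCircuit G σ ∧ IsCyclicallyReduced G σ ∧
      FreelyHomotopic G (iterMap G F k σ) σ) :
    ∃ n ≥ 1, ∀ e : G.E, 2 ≤ (iterMap G F n [e]).length := by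
  have hempty : nonexpandingEdges F = ∅ := by
    by_contra hne
    obtain ⟨l, -, hl, hc, hr⟩ : ∃ l : List G.E, l ≠ [] ∧ (∀ e ∈ l, e ∈ nonexpandingEdges F) ∧
        IsCircuit G l ∧ IsCyclicallyReduced G l := by
      refine not_not.mp fun hno => hforest ⟨_, Set.nonempty_iff_ne_empty.2 hne,
        fun e he => bar_mem_nonexpandingEdges he, fun e he e' he' => ?_, hno⟩
      rw [emap_eq_singleton_firstEdge he, List.mem_singleton] at he'
      exact he' ▸ firstEdge_mem_nonexpandingEdges he
    obtain ⟨i, j, hij, heq⟩ := exists_lt_iterMap_eq hl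
    obtain ⟨hci, hri⟩ := isCircuit_isCyclicallyReduced_iterMap hl hF hc hr i
    refine hatoroidal ⟨j - i, by omega, iterMap G F i l, hci, hri, ?_⟩
    rw [← iterMap_add, Nat.sub_add_cancel hij.le, ← heq]
    exact Relation.ReflTransGen.refl
  refine exists_iterate_expanding_of_forall_exists F fun e => ?_
  obtain ⟨n, hn⟩ : ∃ n, (iterMap G F n [e]).length ≠ 1 := by
    simpa [nonexpandingEdges] using Set.eq_empty_iff_forall_notMem.1 hempty e
  exact ⟨n, by have := one_le_length_iterMap_singleton F n e; omega⟩

/-- Let `f : Γ → Γ` be an immersion of a finite connected core graph with no nontrivial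
`f`-invariant forest and no invariant loop of degree 1 (no `k ≥ 1` and nontrivial loop `σ`
with `f^k(σ)` freely homotopic to `σ`). Then some iterate `f^n` sends every edge to an
edge path of combinatorial length at least 2. -/
theorem exists_iterate_expanding (G : CGraph) (F : GMap G) (hF : IsImmersion G F)
    (hconn : Conn G) (hcore : ∀ v : G.V, valence G v ≠ 1)
    (hforest : ¬ ∃ S : Set G.E, S.Nonempty ∧ (∀ e ∈ S, G.bar e ∈ S) ∧
      (∀ e ∈ S, ∀ e' ∈ F.emap e, e' ∈ S) ∧
      ¬ ∃ l : List G.E, l ≠ [] ∧ (∀ e ∈ l, e ∈ S) ∧ IsCircuit G l ∧ IsCyclicallyReduced G l)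
    (hatoroidal : ¬ ∃ k ≥ 1, ∃ σ : List G.E, IsCircuit G σ ∧ IsCyclicallyReduced G σ ∧
      FreelyHomotopic G (iterMap G F k σ) σ) :
    ∃ n ≥ 1, ∀ e : G.E, 2 ≤ (iterMap G F n [e]).length :=
  exists_iterate_expanding_general G F hF hforest hatoroidal
end

section
/- Let f : Γ → Γ be an immersion of a finite graph and suppose Γ has a nontrivial f-invariant forest F. Let Γ' be the graph obtained by collapsing each component of a maximal f-invariant forest to a point, and f' : Γ' → Γ' the induced map. Then f' is again an immersion. -/
open CGraph

/-!
The key fact is that no reduced path of `Γ` contains a segment `x m x̄` with all edges of `m` in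
the forest `S`: `m` would be a closed reduced path in `S`, which must be empty (peeling off
backtracks at its basepoint leaves a cyclically reduced circuit in `S`), and then `x x̄`
backtracks. The image `f'(e)` is `f(e)` with its forest edges deleted, so a backtrack in `f'(e)`
comes from such a segment in the reduced path `f(e)`. If distinct non-forest edges `e₁, e₂` start
at the same vertex of `Γ'`, their initial vertices are joined by a reduced path `q` in `S`, so
`ē₁ q e₂` is reduced, hence so is its `f`-image. If `f'(e₁)` and `f'(e₂)` began with the same
edge `a`, then `f(eᵢ) = pᵢ a rᵢ` with `pᵢ` in `S` (which is `f`-invariant), and `f(ē₁ q e₂)`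
would contain the forbidden segment `ā p̄₁ f(q) p₂ a`.
-/

theorem List.isChain_filterMap_of_rel {α β : Type*} {g : α → Option β} {R : β → β → Prop}
    {l : List α}
    (h : ∀ l₁ m l₂ x y b₁ b₂, l = l₁ ++ x :: (m ++ y :: l₂) → (∀ z ∈ m, g z = none) →
      g x = some b₁ → g y = some b₂ → R b₁ b₂) :
    (l.filterMap g).IsChain R := by
  refine List.isChain_iff_forall_rel_of_append_cons_cons.mpr fun b₁ b₂ L₁ L₂ hL => ?_
  obtain ⟨l₁, l', rfl, -, hl'⟩ := List.filterMap_eq_append_iff.mp hL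
  obtain ⟨k, x, l'', rfl, -, hx, hl''⟩ := List.filterMap_eq_cons_iff.mp hl'
  obtain ⟨m, y, l₂, rfl, hm, hy, -⟩ := List.filterMap_eq_cons_iff.mp hl''
  exact h (l₁ ++ k) m l₂ x y b₁ b₂ (by simp) hm hx hy

section Collapse

variable {α β : Type*}

def collapseEdge (S : Set α) [DecidablePred (· ∈ S)] (π : {a // a ∉ S} → β) (a : α) :
    Option β :=
  if h : a ∈ S then none else some (π ⟨a, h⟩)

variable {S : Set α} [DecidablePred (· ∈ S)] {π : {a // a ∉ S} → β}

theorem collapseEdge_eq_none_iff {a : α} : collapseEdge S π a = none ↔ a ∈ S := by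
  unfold collapseEdge
  split_ifs <;> simp_all

theorem collapseEdge_eq_some_iff {a : α} {b : β} :
    collapseEdge S π a = some b ↔ ∃ h : a ∉ S, π ⟨a, h⟩ = b := by
  unfold collapseEdge
  split_ifs <;> simp_all

theorem exists_eq_append_of_head?_filterMap_collapseEdge {l : List α} {b : β}
    (h : (l.filterMap (collapseEdge S π)).head? = some b) :
    ∃ p a r, l = p ++ a :: r ∧ (∀ x ∈ p, x ∈ S) ∧ ∃ ha : a ∉ S, π ⟨a, ha⟩ = b := by
  obtain ⟨L, hL⟩ := List.head?_eq_some_iff.mp h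
  obtain ⟨p, a, r, rfl, hp, ha, -⟩ := List.filterMap_eq_cons_iff.mp hL
  exact ⟨p, a, r, rfl, fun x hx => collapseEdge_eq_none_iff.mp (hp x hx),
    collapseEdge_eq_some_iff.mp ha⟩

end Collapse

namespace CGraph

variable {G : CGraph}

theorem τ_bar (e : G.E) : G.τ (G.bar e) = G.ι e := by
  rw [τ, G.bar_bar]

/-- Unlike `IsPath`, a walk records its endpoints and may be empty. -/
inductive IsWalk (G : CGraph) : G.V → G.V → List G.E → Prop
  | nil (v : G.V) : IsWalk G v v []
  | cons {u v : G.V} {e : G.E} {l : List G.E} :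
      G.ι e = u → IsWalk G (G.τ e) v l → IsWalk G u v (e :: l)

abbrev IsNonBacktracking (G : CGraph) (l : List G.E) : Prop :=
  l.IsChain fun e e' => e' ≠ G.bar e

def IsForest (G : CGraph) (S : Set G.E) : Prop :=
  ¬ ∃ l : List G.E, l ≠ [] ∧ (∀ e ∈ l, e ∈ S) ∧ IsCircuit G l ∧ IsCyclicallyReduced G l

namespace IsWalk

variable {u v w : G.V} {l l₁ l₂ : List G.E}

theorem single (e : G.E) : IsWalk G (G.ι e) (G.τ e) [e] :=
  .cons rfl (.nil _)

theorem append (h₁ : IsWalk G u v l₁) (h₂ : IsWalk G v w l₂) : IsWalk G u w (l₁ ++ l₂) := by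
  induction h₁ with
  | nil => exact h₂
  | cons he _ ih => exact .cons he (ih h₂)

theorem of_append (h : IsWalk G u w (l₁ ++ l₂)) : ∃ v, IsWalk G u v l₁ ∧ IsWalk G v w l₂ := by
  induction l₁ generalizing u with
  | nil => exact ⟨u, .nil u, h⟩
  | cons e l₁ ih =>
    obtain _ | ⟨he, h⟩ := h
    obtain ⟨v, h₁, h₂⟩ := ih h
    exact ⟨v, .cons he h₁, h₂⟩

theorem reverse (h : IsWalk G u v l) : IsWalk G v u (l.map G.bar).reverse := by
  induction h with
  | nil v => exact .nil v
  | @cons _ _ e _ he _ ih =>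
    have hbar := single (G.bar e)
    rw [τ_bar, he] at hbar
    simpa using ih.append hbar

theorem startsAt (h : IsWalk G u v l) : StartsAt G l u := by
  cases h with
  | nil => simp [StartsAt]
  | cons he _ => simpa [StartsAt] using he

theorem endsAt (h : IsWalk G u v l) : EndsAt G l v := by
  induction h with
  | nil => simp [EndsAt]
  | cons _ h ih =>
    cases h with
    | nil => simp [EndsAt]
    | cons => simpa [EndsAt] using ih

theorem isPath (h : IsWalk G u v l) : IsPath G l := by
  induction h with
  | nil => exact List.isChain_nil
  | cons _ h ih => exact List.isChain_cons.mpr ⟨fun y hy => (h.startsAt y hy).symm, ih⟩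

theorem exists_isNonBacktracking_subset (h : IsWalk G u v l) :
    ∃ l', IsWalk G u v l' ∧ l' ⊆ l ∧ IsNonBacktracking G l' := by
  induction hn : l.length using Nat.strong_induction_on generalizing l with
  | _ n ih =>
  by_cases hl : IsNonBacktracking G l
  · exact ⟨l, h, List.Subset.refl l, hl⟩
  obtain ⟨e, e', l₁, l₂, rfl, rfl⟩ : ∃ e e' l₁ l₂, l = l₁ ++ e :: e' :: l₂ ∧ e' = G.bar e := by
    simpa [List.isChain_iff_forall_rel_of_append_cons_cons] using hl
  obtain ⟨w, h₁, _ | ⟨rfl, _ | ⟨-, h₂⟩⟩⟩ := h.of_append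
  rw [τ_bar] at h₂
  obtain ⟨l', hl', hsub, hnb⟩ := ih (l₁ ++ l₂).length (by simp [← hn]) (h₁.append h₂) rfl
  refine ⟨l', hl', List.Subset.trans hsub fun x => ?_, hnb⟩
  simp only [List.mem_append, List.mem_cons]
  tauto

theorem isReduced_bar_cons_append {S : Set G.E} {e₁ e₂ : G.E} {q : List G.E}
    (hq : IsWalk G (G.ι e₁) (G.ι e₂) q) (hSbar : ∀ e ∈ S, G.bar e ∈ S) (he₁ : e₁ ∉ S)
    (he₂ : e₂ ∉ S) (hne : e₁ ≠ e₂) (hqS : ∀ e ∈ q, e ∈ S) (hnb : IsNonBacktracking G q) :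
    IsReduced G (G.bar e₁ :: (q ++ [e₂])) := by
  refine ⟨(IsWalk.cons rfl (by rw [τ_bar]; exact hq.append (.single e₂))).isPath, ?_⟩
  refine List.isChain_cons.mpr ⟨fun y hy => ?_, List.isChain_append.mpr
    ⟨hnb, List.isChain_singleton _, fun x hx y hy => ?_⟩⟩
  · rw [G.bar_bar]
    obtain _ | ⟨c, q⟩ := q
    · obtain rfl : e₂ = y := by simpa using hy
      exact fun h => hne h.symm
    · obtain rfl : c = y := by simpa using hy
      exact fun h => he₁ (h ▸ hqS c (by simp))
  · obtain rfl : e₂ = y := by simpa using hy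
    exact fun h => he₂ (h ▸ hSbar x (hqS x (List.mem_of_getLast? hx)))

end IsWalk

theorem IsPath.isWalk_of_cons_append {x y : G.E} {m : List G.E}
    (h : IsPath G (x :: (m ++ [y]))) : IsWalk G (G.τ x) (G.ι y) m := by
  induction m generalizing x with
  | nil => rw [List.isChain_pair.mp h]; exact .nil _
  | cons c m ih =>
    obtain ⟨hxc, h⟩ := List.isChain_cons_cons.mp h
    exact .cons hxc.symm (ih h)

theorem exists_isWalk_of_eqvGen {S : Set G.E} (hSbar : ∀ e ∈ S, G.bar e ∈ S) {u v : G.V}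
    (h : Relation.EqvGen (fun a b => ∃ e ∈ S, G.ι e = a ∧ G.τ e = b) u v) :
    ∃ l, IsWalk G u v l ∧ ∀ e ∈ l, e ∈ S := by
  induction h with
  | rel _ _ h =>
    obtain ⟨e, he, rfl, rfl⟩ := h
    exact ⟨[e], .single e, by simpa using he⟩
  | refl u => exact ⟨[], .nil u, by simp⟩
  | symm _ _ _ ih =>
    obtain ⟨l, hl, hlS⟩ := ih
    exact ⟨_, hl.reverse, by simpa using fun e he => hSbar e (hlS e he)⟩
  | trans _ _ _ _ _ ih₁ ih₂ =>
    obtain ⟨l₁, hl₁, hl₁S⟩ := ih₁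
    obtain ⟨l₂, hl₂, hl₂S⟩ := ih₂
    exact ⟨_, hl₁.append hl₂, fun e he => (List.mem_append.mp he).elim (hl₁S e) (hl₂S e)⟩

namespace IsForest

variable {S : Set G.E}

theorem eq_nil_of_isWalk (hS : IsForest G S) {v : G.V} {l : List G.E} (hw : IsWalk G v v l)
    (hlS : ∀ e ∈ l, e ∈ S) (hl : IsNonBacktracking G l) : l = [] := by
  induction hn : l.length using Nat.strong_induction_on generalizing l v with
  | _ n ih =>
  by_contra hne
  by_cases hcyc : ∀ a ∈ l.head?, ∀ b ∈ l.getLast?, a ≠ G.bar b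
  · exact hS ⟨l, hne, hlS, ⟨hne, hw.isPath, v, hw.startsAt, hw.endsAt⟩, ⟨hw.isPath, hl⟩, hcyc⟩
  push Not at hcyc
  obtain ⟨_, ha, b, hb, rfl⟩ := hcyc
  obtain ⟨t, rfl⟩ := List.head?_eq_some_iff.mp ha
  rcases List.eq_nil_or_concat' t with rfl | ⟨m, c, rfl⟩
  · exact G.bar_ne b (by simpa using hb)
  rw [← List.cons_append, List.getLast?_concat, Option.mem_some_iff] at hb
  subst hb
  have hm := IsPath.isWalk_of_cons_append hw.isPath
  rw [τ_bar] at hm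
  obtain rfl : m = [] := ih m.length (by simp [← hn]) hm (fun e he => hlS e (by simp [he]))
    (hl.infix ⟨[G.bar c], [c], by simp⟩) rfl
  exact List.isChain_pair.mp hl (G.bar_bar c).symm

theorem not_isReduced_append (hS : IsForest G S) {l₁ m l₂ : List G.E} {x : G.E}
    (hm : ∀ e ∈ m, e ∈ S) : ¬ IsReduced G (l₁ ++ x :: m ++ G.bar x :: l₂) := by
  rintro ⟨hpath, hnb⟩
  have hinfix : x :: (m ++ [G.bar x]) <:+: l₁ ++ x :: m ++ G.bar x :: l₂ := ⟨l₁, l₂, by simp⟩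
  have hnb' := hnb.infix hinfix
  obtain rfl := hS.eq_nil_of_isWalk (IsPath.isWalk_of_cons_append (hpath.infix hinfix)) hm
    (hnb'.infix ⟨[x], [G.bar x], by simp⟩)
  exact List.isChain_pair.mp hnb' rfl

end IsForest

theorem GMap.head?_emap_bar (F : GMap G) (e : G.E) :
    (F.emap (G.bar e)).head? = (F.emap e).getLast?.map G.bar := by
  rw [F.emap_bar, List.head?_reverse, List.getLast?_map]

theorem GMap.endsAt_emap (F : GMap G) (e : G.E) : EndsAt G (F.emap e) (F.vmap (G.τ e)) :=
  fun b hb => F.emap_start (G.bar e) (G.bar b) (by simp [F.head?_emap_bar, Option.mem_def.mp hb])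

theorem IsReduced.append {l₁ l₂ : List G.E} (h₁ : IsReduced G l₁) (h₂ : IsReduced G l₂)
    (h : ∀ x ∈ l₁.getLast?, ∀ y ∈ l₂.head?, G.τ x = G.ι y ∧ y ≠ G.bar x) :
    IsReduced G (l₁ ++ l₂) :=
  ⟨List.isChain_append.mpr ⟨h₁.1, h₂.1, fun x hx y hy => (h x hx y hy).1⟩,
    List.isChain_append.mpr ⟨h₁.2, h₂.2, fun x hx y hy => (h x hx y hy).2⟩⟩

namespace IsImmersion

variable {F : GMap G}

theorem emap_junction (hF : IsImmersion G F) {a b : G.E} (hab : G.τ a = G.ι b)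
    (hba : b ≠ G.bar a) {x y : G.E} (hx : x ∈ (F.emap a).getLast?) (hy : y ∈ (F.emap b).head?) :
    G.τ x = G.ι y ∧ y ≠ G.bar x := by
  refine ⟨by rw [F.endsAt_emap a x hx, F.emap_start b y hy, hab], fun hyx => hba ?_⟩
  refine (hF.2 (G.bar a) b hab ?_).symm
  rw [F.head?_emap_bar, Option.mem_def.mp hx, Option.mem_def.mp hy, hyx, Option.map_some]

theorem isReduced_onPaths (hF : IsImmersion G F) {l : List G.E} (hl : IsReduced G l) :
    IsReduced G (onPaths G F l) := by
  induction l with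
  | nil => exact hl
  | cons a t ih =>
    rw [onPaths, List.flatMap_cons]
    refine (hF.1 a).append (ih ⟨hl.1.tail, hl.2.tail⟩) fun x hx y hy => ?_
    obtain _ | ⟨b, t⟩ := t
    · simp at hy
    rw [List.flatMap_cons, List.head?_append_of_ne_nil _ (F.emap_ne b)] at hy
    exact hF.emap_junction (List.isChain_cons_cons.mp hl.1).1 (List.isChain_cons_cons.mp hl.2).1
      hx hy

/-- Two non-forest edges leaving the same component of an invariant forest have `f`-images with
distinct first non-forest edges. -/
theorem eq_of_isWalk_forest (hF : IsImmersion G F) {S : Set G.E} (hS : IsForest G S)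
    (hSbar : ∀ e ∈ S, G.bar e ∈ S) (hSinv : ∀ e ∈ S, ∀ e' ∈ F.emap e, e' ∈ S)
    {e₁ e₂ : G.E} (he₁ : e₁ ∉ S) (he₂ : e₂ ∉ S) {q : List G.E}
    (hq : IsWalk G (G.ι e₁) (G.ι e₂) q) (hqS : ∀ e ∈ q, e ∈ S)
    {p₁ p₂ r₁ r₂ : List G.E} {a : G.E} (h₁ : F.emap e₁ = p₁ ++ a :: r₁)
    (h₂ : F.emap e₂ = p₂ ++ a :: r₂) (hp₁ : ∀ e ∈ p₁, e ∈ S) (hp₂ : ∀ e ∈ p₂, e ∈ S) :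
    e₁ = e₂ := by
  by_contra hne
  obtain ⟨q, hq, hsub, hnb⟩ := hq.exists_isNonBacktracking_subset
  replace hqS : ∀ e ∈ q, e ∈ S := fun e he => hqS e (hsub he)
  have hγ := hq.isReduced_bar_cons_append hSbar he₁ he₂ hne hqS hnb
  have hsplit : onPaths G F (G.bar e₁ :: (q ++ [e₂])) = (r₁.map G.bar).reverse ++
      G.bar a :: ((p₁.map G.bar).reverse ++ onPaths G F q ++ p₂) ++ G.bar (G.bar a) :: r₂ := by
    simp [onPaths, F.emap_bar, h₁, h₂, G.bar_bar]
  refine hS.not_isReduced_append ?_ (hsplit ▸ hF.isReduced_onPaths hγ)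
  simp only [List.mem_append, List.mem_reverse, List.mem_map]
  rintro e ((⟨e, he, rfl⟩ | he) | he)
  · exact hSbar e (hp₁ e he)
  · obtain ⟨x, hx, he⟩ := List.mem_flatMap.mp he
    exact hSinv x (hqS x hx) e he
  · exact hp₂ e he

end IsImmersion

theorem IsForest.isNonBacktracking_filterMap_collapseEdge {G' : CGraph} {S : Set G.E}
    [DecidablePred (· ∈ S)] (hS : IsForest G S) (hSbar : ∀ e ∈ S, G.bar e ∈ S)
    {π : {e // e ∉ S} → G'.E} (hπ : Function.Injective π)
    (hbar : ∀ (e : {e : G.E // e ∉ S}) (h : G.bar e.1 ∉ S), G'.bar (π e) = π ⟨G.bar e.1, h⟩)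
    {l : List G.E} (hl : IsReduced G l) :
    IsNonBacktracking G' (l.filterMap (collapseEdge S π)) := by
  refine List.isChain_filterMap_of_rel fun l₁ m l₂ x y b₁ b₂ hl' hm hx hy hyx => ?_
  obtain ⟨hxS, rfl⟩ := collapseEdge_eq_some_iff.mp hx
  obtain ⟨hyS, rfl⟩ := collapseEdge_eq_some_iff.mp hy
  rw [hbar ⟨x, hxS⟩ fun h => hxS (G.bar_bar x ▸ hSbar _ h)] at hyx
  obtain rfl : y = G.bar x := congrArg Subtype.val (hπ hyx)
  exact hS.not_isReduced_append (fun e he => collapseEdge_eq_none_iff.mp (hm e he))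
    (by simpa using hl' ▸ hl)

end CGraph

open Classical in
theorem collapse_of_invariant_forest_immersion_general (G : CGraph) (F : GMap G)
    (hF : IsImmersion G F)
    (S : Set G.E) (hSbar : ∀ e ∈ S, G.bar e ∈ S)
    (hSforest : ¬ ∃ l : List G.E, l ≠ [] ∧ (∀ e ∈ l, e ∈ S) ∧
      IsCircuit G l ∧ IsCyclicallyReduced G l)
    (hSinv : ∀ e ∈ S, ∀ e' ∈ F.emap e, e' ∈ S)
    (G' : CGraph) (F' : GMap G')
    (πV : G.V → G'.V) (πE : {e : G.E // e ∉ S} → G'.E)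
    (hπE : Function.Bijective πE)
    (hcollapse : ∀ u v : G.V, πV u = πV v ↔
      Relation.EqvGen (fun a b => ∃ e ∈ S, G.ι e = a ∧ G.τ e = b) u v)
    (hι : ∀ e : {e : G.E // e ∉ S}, G'.ι (πE e) = πV (G.ι e.1))
    (hbar : ∀ (e : {e : G.E // e ∉ S}) (h : G.bar e.1 ∉ S),
      G'.bar (πE e) = πE ⟨G.bar e.1, h⟩)
    (hemap : ∀ e : {e : G.E // e ∉ S},
      F'.emap (πE e) = (F.emap e.1).filterMap fun a =>
        if h : a ∈ S then none else some (πE ⟨a, h⟩)) :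
    IsImmersion G' F' := by
  have hforest : IsForest G S := hSforest
  refine ⟨fun e' => ?_, fun x₁ x₂ hx hhead => ?_⟩
  · obtain ⟨e, rfl⟩ := hπE.2 e'
    refine ⟨F'.emap_path _, ?_⟩
    rw [hemap]
    exact hforest.isNonBacktracking_filterMap_collapseEdge hSbar hπE.1 hbar (hF.1 e)
  obtain ⟨⟨e₁, he₁⟩, rfl⟩ := hπE.2 x₁
  obtain ⟨⟨e₂, he₂⟩, rfl⟩ := hπE.2 x₂
  rw [hι, hι] at hx
  obtain ⟨q, hq, hqS⟩ := exists_isWalk_of_eqvGen hSbar ((hcollapse _ _).mp hx)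
  obtain ⟨b, L, hb⟩ := List.exists_cons_of_ne_nil (F'.emap_ne (πE ⟨e₁, he₁⟩))
  have hb₁ : (F'.emap (πE ⟨e₁, he₁⟩)).head? = some b := List.head?_eq_some_iff.mpr ⟨L, hb⟩
  have hb₂ := hhead ▸ hb₁
  rw [hemap] at hb₁ hb₂
  obtain ⟨p₁, a, r₁, h₁, hp₁, _, rfl⟩ := exists_eq_append_of_head?_filterMap_collapseEdge hb₁
  obtain ⟨p₂, a₂, r₂, h₂, hp₂, _, hπ⟩ := exists_eq_append_of_head?_filterMap_collapseEdge hb₂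
  obtain rfl : a₂ = a := congrArg Subtype.val (hπE.1 hπ)
  congr
  exact hF.eq_of_isWalk_forest hforest hSbar hSinv he₁ he₂ hq hqS h₁ h₂ hp₁ hp₂

open Classical in
/-- Let `f : Γ → Γ` be an immersion of a finite graph and `S` a maximal nontrivial
`f`-invariant forest. Let `Γ'` be the graph obtained by collapsing each component of `S`
to a point (vertices of `Γ'` are classes of vertices of `Γ` joined by forest paths, edges
of `Γ'` are the non-forest edges), and let `f'` be the induced map (the image of a
non-forest edge is its `f`-image with the forest edges deleted). Then `f'` is again an
immersion. -/
theorem collapse_of_invariant_forest_immersion (G : CGraph) (F : GMap G)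
    (hF : IsImmersion G F)
    (S : Set G.E) (hSne : S.Nonempty) (hSbar : ∀ e ∈ S, G.bar e ∈ S)
    (hSforest : ¬ ∃ l : List G.E, l ≠ [] ∧ (∀ e ∈ l, e ∈ S) ∧
      IsCircuit G l ∧ IsCyclicallyReduced G l)
    (hSinv : ∀ e ∈ S, ∀ e' ∈ F.emap e, e' ∈ S)
    (hSmax : ∀ T : Set G.E, S ⊆ T → (∀ e ∈ T, G.bar e ∈ T) →
      (∀ e ∈ T, ∀ e' ∈ F.emap e, e' ∈ T) →
      (¬ ∃ l : List G.E, l ≠ [] ∧ (∀ e ∈ l, e ∈ T) ∧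
        IsCircuit G l ∧ IsCyclicallyReduced G l) → T = S)
    (G' : CGraph) (F' : GMap G')
    (πV : G.V → G'.V) (πE : {e : G.E // e ∉ S} → G'.E)
    (hπV : Function.Surjective πV) (hπE : Function.Bijective πE)
    (hcollapse : ∀ u v : G.V, πV u = πV v ↔
      Relation.EqvGen (fun a b => ∃ e ∈ S, G.ι e = a ∧ G.τ e = b) u v)
    (hι : ∀ e : {e : G.E // e ∉ S}, G'.ι (πE e) = πV (G.ι e.1))
    (hbar : ∀ (e : {e : G.E // e ∉ S}) (h : G.bar e.1 ∉ S),
      G'.bar (πE e) = πE ⟨G.bar e.1, h⟩)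
    (hvmap : ∀ v : G.V, F'.vmap (πV v) = πV (F.vmap v))
    (hemap : ∀ e : {e : G.E // e ∉ S},
      F'.emap (πE e) = (F.emap e.1).filterMap fun a =>
        if h : a ∈ S then none else some (πE ⟨a, h⟩)) :
    IsImmersion G' F' :=
  collapse_of_invariant_forest_immersion_general G F hF S hSbar hSforest hSinv G' F' πV πE hπE
    hcollapse hι hbar hemap
end
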